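/- 𝔞⁺(ō) = 𝔠: if ℱ is a mad family in 𝒜_T of cardinality ō, then any family 𝒢 ⊆ [T]^{ℵ₀} disjoint from ℱ such that ℱ ∪ 𝒢 is a mad family on T must have cardinality 𝔠. -/

import Mathlib

open Cardinal Set

/-- The full binary tree `T = 2^{<ω}`, modeled as finite lists of booleans;
`s ≤ t` iff `t` is a prefix of `s` (i.e. `s` extends `t`). -/
abbrev BinTree := List Bool

/-- The restriction `f↾n ∈ 2^{<ω}` of `f ∈ 2^ω`. -/
def restr (f : ℕ → Bool) (n : ℕ) : BinTree := List.ofFn (fun i : Fin n => f i)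

/-- The branch `B(f) = { f↾n : n ∈ ω }` induced by `f ∈ 2^ω`. -/
def branch (f : ℕ → Bool) : Set BinTree := Set.range (restr f)

/-- `⌊X⌋ = { f ∈ 2^ω : |B(f) ∩ X| = ℵ₀ }`. -/
def floorSet (X : Set BinTree) : Set (ℕ → Bool) := {f | (branch f ∩ X).Infinite}

/-- `X` is covered by finitely many branches of `T`. -/
def CoveredByFinitelyManyBranches (X : Set BinTree) : Prop :=
  ∃ s : Finset (ℕ → Bool), X ⊆ ⋃ f ∈ s, branch f

/-- `X` contains no infinite antichain (w.r.t. the prefix/extension order on `T`). -/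
def NoInfiniteAntichain (X : Set BinTree) : Prop :=
  ¬ ∃ A ⊆ X, A.Infinite ∧ IsAntichain (· <+: ·) A

/-- The class `ℬ_T` of infinite subsets of `T` containing no infinite antichain. -/
def Bclass : Set (Set BinTree) := { X | X.Infinite ∧ NoInfiniteAntichain X }

/-- The class `𝒜_T` of infinite antichains of `T`. -/
def Aclass : Set (Set BinTree) := { X | X.Infinite ∧ IsAntichain (· <+: ·) X }

/-- The class `𝒩𝒟_T` of infinite `X ⊆ T` with `⌊X⌋` nowhere dense in Cantor space. -/
def NDclass : Set (Set BinTree) := { X | X.Infinite ∧ IsNowhereDense (floorSet X) }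

/-- `σ` is the standard fair-coin product measure on `2^ω`, characterized as a
probability measure giving each basic clopen set `{ f : f↾ℓ(t) = t }` measure `2^{-ℓ(t)}`. -/
def IsCantorMeasure (σ : MeasureTheory.Measure (ℕ → Bool)) : Prop :=
  MeasureTheory.IsProbabilityMeasure σ ∧
    ∀ t : BinTree, σ { f | restr f t.length = t } = (2 : ENNReal)⁻¹ ^ t.length

/-- The class `𝒩_T` (w.r.t. a measure `σ` on `2^ω`) of infinite `X ⊆ T` with `σ(⌊X⌋) = 0`. -/
def Nclass (σ : MeasureTheory.Measure (ℕ → Bool)) : Set (Set BinTree) :=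
  { X | X.Infinite ∧ σ (floorSet X) = 0 }

/-- Pairwise almost disjoint family of infinite sets. -/
def ADFamily {α : Type*} (F : Set (Set α)) : Prop :=
  (∀ X ∈ F, X.Infinite) ∧ F.Pairwise fun X Y => (X ∩ Y).Finite

/-- `F` is a maximal almost disjoint family within `𝒳`. -/
def MadIn {α : Type*} (𝒳 F : Set (Set α)) : Prop :=
  F ⊆ 𝒳 ∧ ADFamily F ∧ ∀ Y ∈ 𝒳, ∃ X ∈ F, (Y ∩ X).Infinite

/-- The collection `[α]^{ℵ₀}` of all infinite subsets of `α`. -/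
def infSets (α : Type*) : Set (Set α) := { X | X.Infinite }

/-- `𝔞(𝒳)`: the least cardinality of an infinite mad family within `𝒳`. -/
noncomputable def aInv {α : Type*} (𝒳 : Set (Set α)) : Cardinal :=
  sInf { c : Cardinal | ∃ F, F.Infinite ∧ MadIn 𝒳 F ∧ #F = c }

/-- `cov(ℳ)`: the least number of meager subsets of `2^ω` covering `2^ω`. -/
noncomputable def covMeager : Cardinal :=
  sInf { c : Cardinal | ∃ S : Set (Set (ℕ → Bool)),
    (∀ A ∈ S, IsMeagre A) ∧ ⋃₀ S = Set.univ ∧ #S = c }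

/-- `cov(𝒩)`: the least number of `σ`-null subsets of `2^ω` covering `2^ω`. -/
noncomputable def covNull (σ : MeasureTheory.Measure (ℕ → Bool)) : Cardinal :=
  sInf { c : Cardinal | ∃ S : Set (Set (ℕ → Bool)),
    (∀ A ∈ S, σ A = 0) ∧ ⋃₀ S = Set.univ ∧ #S = c }

/-- `F^⊥`: the family of infinite sets almost disjoint from every member of `F`. -/
def perp {α : Type*} (F : Set (Set α)) : Set (Set α) :=
  { Y | Y.Infinite ∧ ∀ X ∈ F, (Y ∩ X).Finite }

/-- Membership in the ideal `ℐ(G)` generated by `G` together with the finite sets: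
`S ⊆* ∪G'` for some finite `G' ⊆ G`. -/
def InIdeal {α : Type*} (G : Set (Set α)) (S : Set α) : Prop :=
  ∃ G' : Finset (Set α), ↑G' ⊆ G ∧ (S \ ⋃₀ ↑G').Finite

/-- `𝔞⁺(F) = 𝔞(F^⊥)`. -/
noncomputable def aPlus {α : Type*} (F : Set (Set α)) : Cardinal := aInv (perp F)

/-- `B` almost decides `F`: `B^⊥` is exactly the family of infinite members of
the ideal generated by `F \ B` and the finite sets. -/
def AlmostDecides {α : Type*} (B F : Set (Set α)) : Prop :=
  perp B = { Y | Y.Infinite ∧ InIdeal (F \ B) Y }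

/-- A subset `C` of a poset is centered: every finite subset of `C` has a common
lower bound. -/
def Centered {P : Type*} [Preorder P] (C : Set P) : Prop :=
  ∀ s : Finset P, ↑s ⊆ C → ∃ p, ∀ q ∈ s, p ≤ q

/-- A poset is σ-centered: it is a countable union of centered subsets. -/
def SigmaCentered (P : Type*) [Preorder P] : Prop :=
  ∃ C : ℕ → Set P, (∀ n, Centered (C n)) ∧ ⋃ n, C n = Set.univ

/-- `D` is dense (below every condition) in the poset `P`. -/
def DenseBelow {P : Type*} [Preorder P] (D : Set P) : Prop :=
  ∀ p : P, ∃ q ∈ D, q ≤ p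

/-- `G` is a filter on the poset `P`. -/
def IsFilterOn {P : Type*} [Preorder P] (G : Set P) : Prop :=
  (∀ p ∈ G, ∀ q, p ≤ q → q ∈ G) ∧ ∀ p ∈ G, ∀ q ∈ G, ∃ r ∈ G, r ≤ p ∧ r ≤ q

/-- Martin's axiom for σ-centered posets: for every nonempty σ-centered poset and
fewer than continuum many dense sets there is a filter meeting them all. -/
def MASigmaCentered : Prop :=
  ∀ (P : Type) (_ : Preorder P) (_ : Nonempty P), SigmaCentered P →
    ∀ 𝒟 : Set (Set P), #𝒟 < Cardinal.continuum → (∀ D ∈ 𝒟, DenseBelow D) →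
      ∃ G : Set P, IsFilterOn G ∧ ∀ D ∈ 𝒟, (G ∩ D).Nonempty

/-!
An antichain meets every branch of `T` in at most one node, so, `ℱ ∪ 𝒢` being mad, every
branch `B(f)` meets some `Y ∈ 𝒢` infinitely often, i.e. `f ∈ ⌊Y⌋`. On the other hand each
`Y ∈ 𝒢` is almost disjoint from every member of `ℱ`, hence, `ℱ` being mad in `𝒜_T`, contains
no infinite antichain; and a set `Y` with `⌊Y⌋` infinite does contain one (a comb along a
splitting sequence of nodes). So the finite sets `⌊Y⌋`, `Y ∈ 𝒢`, cover `2^ω`, and `|𝒢| = 𝔠`.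
-/

@[simp] lemma restr_length (f : ℕ → Bool) (n : ℕ) : (restr f n).length = n :=
  List.length_ofFn

lemma restr_prefix_restr (f : ℕ → Bool) {m n : ℕ} (h : m ≤ n) : restr f m <+: restr f n := by
  rw [List.prefix_iff_eq_take]
  apply List.ext_getElem <;> simp [restr, h, List.getElem_take]

lemma restr_injective (f : ℕ → Bool) : Function.Injective (restr f) := fun m n h => by
  simpa using congrArg List.length h

lemma restr_eq_restr_iff {f g : ℕ → Bool} {n : ℕ} :
    restr f n = restr g n ↔ ∀ i < n, f i = g i := by
  simp [restr, List.ofFn_inj, funext_iff, Fin.forall_iff]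

lemma branch_infinite (f : ℕ → Bool) : (branch f).Infinite :=
  Set.infinite_range_of_injective (restr_injective f)

lemma mem_floorSet_iff {Y : Set BinTree} {f : ℕ → Bool} :
    f ∈ floorSet Y ↔ {k | restr f k ∈ Y}.Infinite := by
  have : branch f ∩ Y = restr f '' {k | restr f k ∈ Y} := by
    ext x; constructor
    · rintro ⟨⟨k, rfl⟩, hk⟩; exact ⟨k, hk, rfl⟩
    · rintro ⟨k, hk, rfl⟩; exact ⟨⟨k, rfl⟩, hk⟩
  change (branch f ∩ Y).Infinite ↔ _
  rw [this, Set.infinite_image_iff (restr_injective f).injOn]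

lemma IsAntichain.inter_branch_finite {A : Set BinTree} (hA : IsAntichain (· <+: ·) A)
    (f : ℕ → Bool) : (branch f ∩ A).Finite := by
  refine Set.Subsingleton.finite ?_
  rintro _ ⟨⟨m, rfl⟩, hm⟩ _ ⟨⟨n, rfl⟩, hn⟩
  by_contra hne
  rcases le_total m n with h | h
  · exact hA hm hn hne (restr_prefix_restr f h)
  · exact hA hn hm (Ne.symm hne) (restr_prefix_restr f h)

lemma not_prefix_of_prefix_of_ne {u v t : BinTree} (hlen : u.length = v.length) (huv : u ≠ v)
    (hu : u <+: t) : ¬ v <+: t := fun hv =>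
  huv ((List.prefix_of_prefix_length_le hu hv hlen.le).eq_of_length hlen)

def cylinder (s : BinTree) : Set (ℕ → Bool) := {f | restr f s.length = s}

lemma restr_mem_cylinder (f : ℕ → Bool) (n : ℕ) : f ∈ cylinder (restr f n) := by
  simp [cylinder]

lemma prefix_restr_of_mem_cylinder {s : BinTree} {f : ℕ → Bool} (hf : f ∈ cylinder s) {n : ℕ}
    (hn : s.length ≤ n) : s <+: restr f n :=
  hf ▸ restr_prefix_restr f hn

lemma Set.Infinite.exists_length_eq_inter_cylinder_infinite {S : Set (ℕ → Bool)}
    (hS : S.Infinite) (n : ℕ) : ∃ c : BinTree, c.length = n ∧ (S ∩ cylinder c).Infinite := by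
  by_contra! hfin
  refine hS (((List.finite_length_eq Bool n).biUnion fun c hc => hfin c hc).subset ?_)
  intro f hf
  exact Set.mem_biUnion (restr_length f n) ⟨hf, restr_mem_cylinder f n⟩

lemma exists_splitting_of_inter_cylinder_infinite {Y : Set BinTree} {s : BinTree}
    (hs : (floorSet Y ∩ cylinder s).Infinite) :
    ∃ c t : BinTree, s <+: c ∧ (floorSet Y ∩ cylinder c).Infinite ∧ t ∈ Y ∧ s <+: t ∧
      ¬ c <+: t ∧ ¬ t <+: c := by
  obtain ⟨f, hf, g, hg, hfg⟩ := hs.nontrivial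
  obtain ⟨i, hi⟩ := Function.ne_iff.mp hfg
  set d := max (i + 1) s.length
  have hsd : s.length ≤ d := le_max_right _ _
  have hfgd : restr f d ≠ restr g d := fun h =>
    hi (restr_eq_restr_iff.mp h i (Nat.lt_of_succ_le (le_max_left _ _)))
  obtain ⟨c, hcd, hc⟩ := hs.exists_length_eq_inter_cylinder_infinite d
  have hsc : s <+: c := by
    obtain ⟨h, ⟨-, hhs⟩, hhc⟩ := hc.nonempty
    have hhd : restr h d = c := by rw [← hcd]; exact hhc
    exact hhd ▸ prefix_restr_of_mem_cylinder hhs hsd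
  -- `f` and `g` already differ at level `d`, so one of them does not pass through `c`
  obtain ⟨f', ⟨hf'Y, hf's⟩, hf'c⟩ : ∃ f' ∈ floorSet Y ∩ cylinder s, restr f' d ≠ c := by
    by_cases hfc : restr f d = c
    · exact ⟨g, hg, fun h => hfgd (hfc.trans h.symm)⟩
    · exact ⟨f, hf, hfc⟩
  obtain ⟨k, hkY, hdk⟩ := (mem_floorSet_iff.mp hf'Y).exists_gt d
  refine ⟨c, restr f' k, hsc, hc.mono fun _ h => ⟨h.1.1, h.2⟩, hkY,
    prefix_restr_of_mem_cylinder hf's (hsd.trans hdk.le),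
    not_prefix_of_prefix_of_ne (by simp [hcd]) hf'c (restr_prefix_restr f' hdk.le), ?_⟩
  intro hkc
  have := hkc.length_le
  simp only [restr_length] at this
  omega

lemma exists_infinite_antichain_of_splitting {α : Type*} {Y : Set (List α)} (P : List α → Prop)
    {s₀ : List α} (h₀ : P s₀)
    (hsplit : ∀ s, P s → ∃ c t, s <+: c ∧ P c ∧ t ∈ Y ∧ s <+: t ∧ ¬ c <+: t ∧ ¬ t <+: c) :
    ∃ A ⊆ Y, A.Infinite ∧ IsAntichain (· <+: ·) A := by
  choose! next tooth hnext hPnext htooth hprefix hnc hnt using hsplit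
  set node : ℕ → List α := fun n => next^[n] s₀
  have hnode_succ (n : ℕ) : node (n + 1) = next (node n) := Function.iterate_succ_apply' _ _ _
  have hP (n : ℕ) : P (node n) := by
    induction n with
    | zero => exact h₀
    | succ n ih => rw [hnode_succ]; exact hPnext _ ih
  have hchain {m n : ℕ} (hmn : m ≤ n) : node m <+: node n := by
    induction hmn with
    | refl => exact List.prefix_refl _
    | step _ ih => rw [hnode_succ]; exact ih.trans (hnext _ (hP _))
  -- the tooth at `n > m` lies above `next (node m)`, which is incomparable with the tooth at `m`
  have hincomp {m n : ℕ} (hmn : m < n) :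
      ¬ tooth (node m) <+: tooth (node n) ∧ ¬ tooth (node n) <+: tooth (node m) := by
    have hc : next (node m) <+: tooth (node n) :=
      hnode_succ m ▸ (hchain hmn).trans (hprefix _ (hP n))
    refine ⟨fun h => ?_, fun h => hnc _ (hP m) (hc.trans h)⟩
    rcases List.prefix_or_prefix_of_prefix h hc with h' | h'
    · exact hnt _ (hP m) h'
    · exact hnc _ (hP m) h'
  have hinj : Function.Injective (tooth ∘ node) :=
    .of_lt_imp_ne fun m n hmn h =>
      (hincomp hmn).1 (by simp only [Function.comp_apply] at h; rw [h])
  refine ⟨range (tooth ∘ node), range_subset_iff.2 fun n => htooth _ (hP n),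
    infinite_range_of_injective hinj, ?_⟩
  rintro _ ⟨m, rfl⟩ _ ⟨n, rfl⟩ hne
  rcases lt_or_gt_of_ne (fun h : m = n => hne (h ▸ rfl)) with hmn | hmn
  · exact (hincomp hmn).1
  · exact (hincomp hmn).2

lemma exists_infinite_antichain_of_floorSet_infinite {Y : Set BinTree}
    (hY : (floorSet Y).Infinite) : ∃ A ⊆ Y, A.Infinite ∧ IsAntichain (· <+: ·) A :=
  exists_infinite_antichain_of_splitting (fun s => (floorSet Y ∩ cylinder s).Infinite)
    (s₀ := []) (hY.mono fun _ hf => ⟨hf, rfl⟩)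
    fun _ hs => exists_splitting_of_inter_cylinder_infinite hs

lemma floorSet_finite_of_forall_inter_finite {F : Set (Set BinTree)} (hF : MadIn Aclass F)
    {Y : Set BinTree} (hY : ∀ X ∈ F, (Y ∩ X).Finite) : (floorSet Y).Finite := by
  by_contra hinf
  obtain ⟨A, hAY, hA, hAanti⟩ := exists_infinite_antichain_of_floorSet_infinite hinf
  obtain ⟨X, hXF, hAX⟩ := hF.2.2 A ⟨hA, hAanti⟩
  exact hAX ((hY X hXF).subset (inter_subset_inter_left X hAY))

lemma iUnion_floorSet_eq_univ {F G : Set (Set BinTree)} (hFA : F ⊆ Aclass)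
    (hmad : MadIn (infSets BinTree) (F ∪ G)) : ⋃ Y : G, floorSet Y = Set.univ := by
  refine eq_univ_of_forall fun f => ?_
  obtain ⟨Z, hZ | hZ, hfZ⟩ := hmad.2.2 (branch f) (branch_infinite f)
  · exact absurd ((hFA hZ).2.inter_branch_finite f) hfZ
  · exact mem_iUnion.2 ⟨⟨Z, hZ⟩, hfZ⟩

universe u

lemma Cardinal.mk_le_mul_aleph0_of_iUnion_eq_univ {α ι : Type u} {S : ι → Set α}
    (hS : ∀ i, (S i).Countable) (h : ⋃ i, S i = Set.univ) : #α ≤ #ι * ℵ₀ :=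
  calc #α = #(⋃ i, S i) := by rw [h, mk_univ]
    _ ≤ #ι * ⨆ i, #(S i) := mk_iUnion_le S
    _ ≤ #ι * ℵ₀ := mul_le_mul_right (ciSup_le' fun i => (hS i).le_aleph0) _

lemma Cardinal.continuum_le_of_continuum_le_mul_aleph0 {κ : Cardinal} (h : 𝔠 ≤ κ * ℵ₀) :
    𝔠 ≤ κ := by
  by_contra! hκ
  exact (mul_lt_of_lt aleph0_le_continuum hκ aleph0_lt_continuum).not_ge h

lemma mk_set_binTree : #(Set BinTree) = 𝔠 := by
  rw [mk_set, mk_list_eq_aleph0, two_power_aleph0]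

lemma mk_cantor_space : #(ℕ → Bool) = 𝔠 := by
  rw [mk_arrow, mk_bool, mk_nat, lift_two, lift_aleph0, two_power_aleph0]

theorem stmt13_general (F G : Set (Set BinTree)) (hF : MadIn Aclass F)
    (hdisj : Disjoint F G)
    (hmad : MadIn (infSets BinTree) (F ∪ G)) :
    #G = Cardinal.continuum := by
  refine le_antisymm ((mk_set_le G).trans_eq mk_set_binTree) ?_
  have hGF (Y : G) : ∀ X ∈ F, ((Y : Set BinTree) ∩ X).Finite := fun X hX => by
    rw [inter_comm]
    exact hmad.2.1.2 (Or.inl hX) (Or.inr Y.2) (hdisj.ne_of_mem hX Y.2)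
  have hcover := Cardinal.mk_le_mul_aleph0_of_iUnion_eq_univ
    (fun Y => (floorSet_finite_of_forall_inter_finite hF (hGF Y)).countable)
    (iUnion_floorSet_eq_univ hF.1 hmad)
  exact Cardinal.continuum_le_of_continuum_le_mul_aleph0 (mk_cantor_space ▸ hcover)

/-- `𝔞⁺(ō) = 𝔠`: if `F` is mad in `𝒜_T` of cardinality `ō = 𝔞(𝒜_T)` and `G` is disjoint
from `F` with `F ∪ G` mad on `T`, then `|G| = 𝔠`. -/
theorem stmt13 (F G : Set (Set BinTree)) (hF : MadIn Aclass F)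
    (hcard : #F = aInv Aclass) (hdisj : Disjoint F G)
    (hmad : MadIn (infSets BinTree) (F ∪ G)) :
    #G = Cardinal.continuum :=
  stmt13_general F G hF hdisj hmad
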